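/- arXiv:2309.16130 — 4 statements merged into one kernel-verified Lean document; each statement's English description precedes it below -/
import Mathlib

section
/- Let C be a C*-algebra and A a closed subalgebra of C satisfying A*·A ⊆ closure(A + A*). If π : C → D is a surjective *-homomorphism of C*-algebras, then the closed subalgebra π(A)‾ of D satisfies π(A)‾*·π(A)‾ ⊆ closure(π(A) + π(A)*). -/
open scoped Pointwise CStarAlgebra

/-- Quotients of semi-Dirichlet C*-covers are semi-Dirichlet. -/
theorem stmt_1 {C D : Type*}
    [NonUnitalNormedRing C] [StarRing C] [CStarRing C] [NormedSpace ℂ C]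
    [IsScalarTower ℂ C C] [SMulCommClass ℂ C C] [StarModule ℂ C] [CompleteSpace C]
    [NonUnitalNormedRing D] [StarRing D] [CStarRing D] [NormedSpace ℂ D]
    [IsScalarTower ℂ D D] [SMulCommClass ℂ D D] [StarModule ℂ D] [CompleteSpace D]
    (A : NonUnitalSubalgebra ℂ C) (hA : IsClosed (A : Set C))
    (hsD : (star '' (A : Set C)) * (A : Set C) ⊆ closure ((A : Set C) + star '' (A : Set C)))
    (π : C →⋆ₙₐ[ℂ] D) (hπ : Function.Surjective π) :
    (star '' closure (π '' (A : Set C))) * closure (π '' (A : Set C)) ⊆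
      closure ((π '' (A : Set C)) + star '' (π '' (A : Set C))) := by
  letI : NonUnitalCStarAlgebra C := { }
  letI : NonUnitalCStarAlgebra D := { }
  have hcont : Continuous π := by
    refine AddMonoidHomClass.continuous_of_bound π 1 fun a => ?_
    rw [one_mul]
    exact NonUnitalStarAlgHom.norm_apply_le π a
  set T : Set D := π '' (A : Set C) with hT
  rintro z ⟨x, ⟨x', hx', rfl⟩, y, hy, rfl⟩
  have key : ∀ u ∈ T, ∀ v ∈ T, star u * v ∈ closure (T + star '' T) := by
    rintro _ ⟨a, ha, rfl⟩ _ ⟨b, hb, rfl⟩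
    have h1 : star a * b ∈ closure ((A : Set C) + star '' (A : Set C)) :=
      hsD ⟨star a, ⟨a, ha, rfl⟩, b, hb, rfl⟩
    have h2 : Set.MapsTo π ((A : Set C) + star '' (A : Set C)) (T + star '' T) := by
      rintro _ ⟨c, hc, _, ⟨d, hd, rfl⟩, rfl⟩
      exact ⟨π c, ⟨c, hc, rfl⟩, star (π d), ⟨π d, ⟨d, hd, rfl⟩, rfl⟩, by rw [map_add, map_star]⟩
    have := map_mem_closure hcont h1 h2
    simpa [map_star, map_mul] using this
  have h := map_mem_closure₂ (f := fun u v : D => star u * v)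
    (by fun_prop) hx' hy key
  simpa [closure_closure] using h
end

section
/- Let H be a Hilbert space, C ⊆ B(H) a C*-subalgebra, and X ⊆ B(H) a closed C-bimodule with X*·X ⊆ C. Let U be the bilateral shift on ℓ²(ℤ), and consider the algebra B generated by X⊗U and C⊗I inside B(H⊗ℓ²(ℤ)). Then the norm-closed algebra A = closure(alg(X⊗U, C⊗I)) satisfies A*·A ⊆ closure(A + A*). -/
open scoped Pointwise

/-!
For generators `a, b` of `B = alg(X ⊗ U, C ⊗ I)` the product `a* b` lies in `B + B*`:
`(x ⊗ U)*(y ⊗ U) = x*y ⊗ I` with `x*y ∈ C`, `(x ⊗ U)*(c ⊗ I) = ((c*x) ⊗ U)*`, and the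
products `(c ⊗ I)*(y ⊗ U)`, `(c ⊗ I)*(c' ⊗ I)` are generators again. An induction over the algebra
generated (first on the right factor with the left one a generator, then on the left factor)
propagates `B* B ⊆ B + B*`, and continuity of `(a, b) ↦ a* b` carries it to the closure.
-/

open scoped lp

namespace Submodule

variable {R E : Type*} [CommSemiring R] [StarRing R] [NonUnitalSemiring E] [StarRing E]
  [Module R E] [StarModule R E]

def supStar (M N : Submodule R E) : Submodule R E where
  carrier := (M : Set E) + star '' (N : Set E)
  add_mem' := by
    rintro _ _ ⟨u, hu, _, ⟨w, hw, rfl⟩, rfl⟩ ⟨u', hu', _, ⟨w', hw', rfl⟩, rfl⟩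
    exact ⟨u + u', add_mem hu hu', star (w + w'), ⟨w + w', add_mem hw hw', rfl⟩, by
      rw [star_add, add_add_add_comm]⟩
  zero_mem' := ⟨0, zero_mem M, 0, ⟨0, zero_mem N, star_zero E⟩, add_zero 0⟩
  smul_mem' := by
    rintro r _ ⟨u, hu, _, ⟨w, hw, rfl⟩, rfl⟩
    exact ⟨r • u, smul_mem M r hu, star (star r • w),
      ⟨star r • w, smul_mem N _ hw, rfl⟩, by
      rw [star_smul, star_star, smul_add]⟩

variable {M N : Submodule R E}

theorem coe_supStar : (M.supStar N : Set E) = (M : Set E) + star '' (N : Set E) := rfl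

theorem mem_supStar_of_mem_left {u : E} (hu : u ∈ M) : u ∈ M.supStar N :=
  ⟨u, hu, 0, ⟨0, zero_mem N, star_zero E⟩, add_zero u⟩

theorem star_mem_supStar {w : E} (hw : w ∈ N) : star w ∈ M.supStar N :=
  ⟨0, zero_mem M, star w, ⟨w, hw, rfl⟩, zero_add _⟩

theorem supStar_mono {M' N' : Submodule R E} (hM : M ≤ M') (hN : N ≤ N') :
    M.supStar N ≤ M'.supStar N' := by
  rintro _ ⟨u, hu, _, ⟨w, hw, rfl⟩, rfl⟩
  exact ⟨u, hM hu, star w, ⟨w, hN hw, rfl⟩, rfl⟩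

theorem star_mul_mem_of_mem_span [IsScalarTower R E E] {K : Submodule R E} {s : Set E} {b : E}
    (h : ∀ g ∈ s, star g * b ∈ K) {w : E} (hw : w ∈ span R s) : star w * b ∈ K := by
  induction hw using span_induction with
  | mem g hg => exact h g hg
  | zero => simpa only [star_zero, zero_mul] using K.zero_mem
  | add w₁ w₂ _ _ ih₁ ih₂ => simpa only [star_add, add_mul] using K.add_mem ih₁ ih₂
  | smul r w _ ih => simpa only [star_smul, smul_mul_assoc] using K.smul_mem (star r) ih

end Submodule

namespace NonUnitalAlgebra

open Submodule

variable {R E : Type*} [CommSemiring R] [StarRing R] [NonUnitalSemiring E] [StarRing E]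
  [Module R E] [StarModule R E] [IsScalarTower R E E] [SMulCommClass R E E] {G : Set E}

theorem star_mul_mem_supStar_span
    (hG : ∀ g ∈ G, ∀ g' ∈ G, star g * g' ∈ (adjoin R G).toSubmodule.supStar (span R G))
    {g b : E} (hg : g ∈ G) (hb : b ∈ adjoin R G) :
    star g * b ∈ (adjoin R G).toSubmodule.supStar (span R G) := by
  induction hb using adjoin_induction generalizing g with
  | mem b hb => exact hG g hg b hb
  | zero => simpa only [mul_zero] using zero_mem _
  | add b₁ b₂ _ _ ih₁ ih₂ => simpa only [mul_add] using add_mem (ih₁ hg) (ih₂ hg)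
  | smul r b _ ih => simpa only [mul_smul_comm] using smul_mem _ r (ih hg)
  | mul b₁ b₂ _ hb₂ ih₁ ih₂ =>
    obtain ⟨u, hu, _, ⟨w, hw, rfl⟩, huw⟩ := ih₁ hg
    rw [← mul_assoc, ← huw, add_mul]
    -- `w` lies in the span of `G`, not just in `B`, so `star w * b₂` reduces to generators.
    exact add_mem (mem_supStar_of_mem_left (show u * b₂ ∈ adjoin R G from mul_mem hu hb₂))
      (star_mul_mem_of_mem_span (fun g' hg' => ih₂ hg') hw)

theorem star_mul_mem_supStar_adjoin
    (hG : ∀ g ∈ G, ∀ g' ∈ G, star g * g' ∈ (adjoin R G).toSubmodule.supStar (span R G))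
    {a b : E} (ha : a ∈ adjoin R G) (hb : b ∈ adjoin R G) :
    star a * b ∈ (adjoin R G).toSubmodule.supStar (adjoin R G).toSubmodule := by
  have hspan : span R G ≤ (adjoin R G).toSubmodule := span_le.mpr (subset_adjoin R)
  induction ha using adjoin_induction generalizing b with
  | mem a ha => exact supStar_mono le_rfl hspan (star_mul_mem_supStar_span hG ha hb)
  | zero => simpa only [star_zero, zero_mul] using zero_mem _
  | add a₁ a₂ _ _ ih₁ ih₂ =>
    simpa only [star_add, add_mul] using add_mem (ih₁ hb) (ih₂ hb)
  | smul r a _ ih => simpa only [star_smul, smul_mul_assoc] using smul_mem _ (star r) (ih hb)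
  | mul a₁ a₂ _ ha₂ ih₁ ih₂ =>
    obtain ⟨u, hu, _, ⟨w, hw, rfl⟩, huw⟩ := ih₁ hb
    rw [star_mul, mul_assoc, ← huw, mul_add, ← star_mul]
    exact add_mem (ih₂ hu) (star_mem_supStar (show w * a₂ ∈ adjoin R G from mul_mem hw ha₂))

end NonUnitalAlgebra

theorem star_mul_mem_closure {E : Type*} [TopologicalSpace E] [Mul E] [Star E] [ContinuousMul E]
    [ContinuousStar E] {s t : Set E} (h : ∀ a ∈ s, ∀ b ∈ s, star a * b ∈ t) {a b : E}
    (ha : a ∈ closure s) (hb : b ∈ closure s) : star a * b ∈ closure t :=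
  map_mem_closure₂ (f := fun a b => star a * b)
    ((continuous_star.comp continuous_fst).mul continuous_snd) ha hb h

namespace ShiftTensor

variable {ι H : Type*} [NormedAddCommGroup H] [InnerProductSpace ℂ H]

theorem ext_coord {P Q : ℓ²(ι, H) →L[ℂ] ℓ²(ι, H)}
    (h : ∀ f n, (P f : ∀ _ : ι, H) n = (Q f : ∀ _ : ι, H) n) : P = Q :=
  ContinuousLinearMap.ext fun f => lp.ext (funext (h f))

-- `T x = x ⊗ U_σ`, with `U_σ` the permutation unitary of `σ`, and `S c = c ⊗ I`.
variable {T S : (H →L[ℂ] H) → (ℓ²(ι, H) →L[ℂ] ℓ²(ι, H))} {σ : Equiv.Perm ι}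
  (hT : ∀ (x : H →L[ℂ] H) (f : ℓ²(ι, H)) (n : ι),
    (T x f : ∀ _ : ι, H) n = x ((f : ∀ _ : ι, H) (σ n)))
  (hS : ∀ (x : H →L[ℂ] H) (f : ℓ²(ι, H)) (n : ι),
    (S x f : ∀ _ : ι, H) n = x ((f : ∀ _ : ι, H) n))
include hS

theorem diag_mul_diag (a b : H →L[ℂ] H) : S a * S b = S (a * b) :=
  ext_coord fun f n => by simp only [mul_apply_eq_comp, hS]

include hT in
theorem diag_mul_shift (a b : H →L[ℂ] H) : S a * T b = T (a * b) :=
  ext_coord fun f n => by simp only [mul_apply_eq_comp, hS, hT]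

variable [CompleteSpace H]

theorem star_diag (c : H →L[ℂ] H) : star (S c) = S (star c) := by
  rw [ContinuousLinearMap.star_eq_adjoint, eq_comm, ContinuousLinearMap.eq_adjoint_iff]
  intro f g
  rw [lp.inner_eq_tsum, lp.inner_eq_tsum]
  refine tsum_congr fun n => ?_
  rw [hS, hS, ContinuousLinearMap.star_eq_adjoint, ContinuousLinearMap.adjoint_inner_left]

include hT in
theorem star_shift_mul_shift (x y : H →L[ℂ] H) : star (T x) * T y = S (star x * y) := by
  refine ContinuousLinearMap.ext fun g => ext_inner_left ℂ fun f => ?_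
  rw [mul_apply_eq_comp, ContinuousLinearMap.star_eq_adjoint,
    ContinuousLinearMap.adjoint_inner_right, lp.inner_eq_tsum, lp.inner_eq_tsum]
  calc ∑' n, inner ℂ ((T x f : ∀ _ : ι, H) n) ((T y g : ∀ _ : ι, H) n)
      = ∑' n, inner ℂ ((f : ∀ _ : ι, H) (σ n))
          ((star x * y) ((g : ∀ _ : ι, H) (σ n))) := by
        refine tsum_congr fun n => ?_
        rw [hT, hT, mul_apply_eq_comp, ContinuousLinearMap.star_eq_adjoint,
          ContinuousLinearMap.adjoint_inner_right]
    _ = ∑' n, inner ℂ ((f : ∀ _ : ι, H) n) ((star x * y) ((g : ∀ _ : ι, H) n)) :=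
        σ.tsum_eq fun n => inner ℂ ((f : ∀ _ : ι, H) n) ((star x * y) ((g : ∀ _ : ι, H) n))
    _ = ∑' n, inner ℂ ((f : ∀ _ : ι, H) n) ((S (star x * y) g : ∀ _ : ι, H) n) := by
        simp only [hS]

include hT in
theorem star_mul_mem_supStar_of_mem_generators (C : NonUnitalStarSubalgebra ℂ (H →L[ℂ] H))
    {X : Set (H →L[ℂ] H)} (hCX : (C : Set (H →L[ℂ] H)) * X ⊆ X)
    (hXX : star '' X * X ⊆ (C : Set (H →L[ℂ] H))) :
    ∀ g ∈ T '' X ∪ S '' C, ∀ g' ∈ T '' X ∪ S '' C,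
      star g * g' ∈ (NonUnitalAlgebra.adjoin ℂ (T '' X ∪ S '' C)).toSubmodule.supStar
        (Submodule.span ℂ (T '' X ∪ S '' C)) := by
  have hT_gen {x} (hx : x ∈ X) : T x ∈ T '' X ∪ S '' C := Or.inl ⟨x, hx, rfl⟩
  have hS_gen {c} (hc : c ∈ C) : S c ∈ T '' X ∪ S '' C := Or.inr ⟨c, hc, rfl⟩
  rintro _ (⟨x, hx, rfl⟩ | ⟨c, hc, rfl⟩) _ (⟨y, hy, rfl⟩ | ⟨c', hc', rfl⟩)
  · rw [star_shift_mul_shift hT hS]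
    exact Submodule.mem_supStar_of_mem_left (NonUnitalAlgebra.subset_adjoin ℂ
      (hS_gen (hXX ⟨star x, ⟨x, hx, rfl⟩, y, hy, rfl⟩)))
  · rw [← star_star (S c'), ← star_mul, star_diag hS, diag_mul_shift hT hS]
    exact Submodule.star_mem_supStar (Submodule.subset_span
      (hT_gen (hCX ⟨star c', star_mem hc', x, hx, rfl⟩)))
  · rw [star_diag hS, diag_mul_shift hT hS]
    exact Submodule.mem_supStar_of_mem_left (NonUnitalAlgebra.subset_adjoin ℂ
      (hT_gen (hCX ⟨star c, star_mem hc, y, hy, rfl⟩)))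
  · rw [star_diag hS, diag_mul_diag hS]
    exact Submodule.mem_supStar_of_mem_left (NonUnitalAlgebra.subset_adjoin ℂ
      (hS_gen (mul_mem (star_mem hc) hc')))

end ShiftTensor

theorem stmt_3_general {H : Type*} [NormedAddCommGroup H] [InnerProductSpace ℂ H] [CompleteSpace H]
    (C : NonUnitalStarSubalgebra ℂ (H →L[ℂ] H))
    (X : Submodule ℂ (H →L[ℂ] H))
    (hCX : (C : Set (H →L[ℂ] H)) * (X : Set (H →L[ℂ] H)) ⊆ (X : Set (H →L[ℂ] H)))
    (hXX : (star '' (X : Set (H →L[ℂ] H))) * (X : Set (H →L[ℂ] H)) ⊆ (C : Set (H →L[ℂ] H)))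
    -- `T x` is the operator `x ⊗ U` and `S c` is the operator `c ⊗ I` on `H ⊗ ℓ²(ℤ)`:
    (T S : (H →L[ℂ] H) → (lp (fun _ : ℤ => H) 2 →L[ℂ] lp (fun _ : ℤ => H) 2))
    (hT : ∀ (x : H →L[ℂ] H) (f : lp (fun _ : ℤ => H) 2) (n : ℤ),
      (T x f : ∀ _ : ℤ, H) n = x ((f : ∀ _ : ℤ, H) (n + 1)))
    (hS : ∀ (x : H →L[ℂ] H) (f : lp (fun _ : ℤ => H) 2) (n : ℤ),
      (S x f : ∀ _ : ℤ, H) n = x ((f : ∀ _ : ℤ, H) n))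
    (A : Set (lp (fun _ : ℤ => H) 2 →L[ℂ] lp (fun _ : ℤ => H) 2))
    (hA : A = closure (NonUnitalAlgebra.adjoin ℂ
      (T '' (X : Set (H →L[ℂ] H)) ∪ S '' (C : Set (H →L[ℂ] H))) : Set _)) :
    star '' A * A ⊆ closure (A + star '' A) := by
  subst hA
  rintro _ ⟨_, ⟨a, ha, rfl⟩, b, hb, rfl⟩
  have hgen := ShiftTensor.star_mul_mem_supStar_of_mem_generators (σ := Equiv.addRight 1)
    hT hS C hCX hXX
  refine closure_mono ?_ (star_mul_mem_closure
    (fun a ha b hb => NonUnitalAlgebra.star_mul_mem_supStar_adjoin hgen ha hb) ha hb)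
  rw [Submodule.coe_supStar]
  exact Set.add_subset_add subset_closure (Set.image_mono subset_closure)

/-- The concrete model of the tensor algebra of a C*-correspondence: the closed algebra
generated by `X ⊗ U` and `C ⊗ I` on `H ⊗ ℓ²(ℤ)` (with `U` the bilateral shift,
realized on `lp (fun _ : ℤ => H) 2`) is semi-Dirichlet. -/
theorem stmt_3 {H : Type*} [NormedAddCommGroup H] [InnerProductSpace ℂ H] [CompleteSpace H]
    (C : NonUnitalStarSubalgebra ℂ (H →L[ℂ] H)) (hC : IsClosed (C : Set (H →L[ℂ] H)))
    (X : Submodule ℂ (H →L[ℂ] H)) (hXcl : IsClosed (X : Set (H →L[ℂ] H)))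
    (hCX : (C : Set (H →L[ℂ] H)) * (X : Set (H →L[ℂ] H)) ⊆ (X : Set (H →L[ℂ] H)))
    (hXC : (X : Set (H →L[ℂ] H)) * (C : Set (H →L[ℂ] H)) ⊆ (X : Set (H →L[ℂ] H)))
    (hXX : (star '' (X : Set (H →L[ℂ] H))) * (X : Set (H →L[ℂ] H)) ⊆ (C : Set (H →L[ℂ] H)))
    -- `T x` is the operator `x ⊗ U` and `S c` is the operator `c ⊗ I` on `H ⊗ ℓ²(ℤ)`:
    (T S : (H →L[ℂ] H) → (lp (fun _ : ℤ => H) 2 →L[ℂ] lp (fun _ : ℤ => H) 2))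
    (hT : ∀ (x : H →L[ℂ] H) (f : lp (fun _ : ℤ => H) 2) (n : ℤ),
      (T x f : ∀ _ : ℤ, H) n = x ((f : ∀ _ : ℤ, H) (n + 1)))
    (hS : ∀ (x : H →L[ℂ] H) (f : lp (fun _ : ℤ => H) 2) (n : ℤ),
      (S x f : ∀ _ : ℤ, H) n = x ((f : ∀ _ : ℤ, H) n))
    (A : Set (lp (fun _ : ℤ => H) 2 →L[ℂ] lp (fun _ : ℤ => H) 2))
    (hA : A = closure (NonUnitalAlgebra.adjoin ℂ
      (T '' (X : Set (H →L[ℂ] H)) ∪ S '' (C : Set (H →L[ℂ] H))) : Set _)) :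
    star '' A * A ⊆ closure (A + star '' A) :=
  stmt_3_general C X hCX hXX T S hT hS A hA
end

section
/- Let C be a C*-algebra and A a closed subalgebra, and let B = [[A, 0], [closure(A + A*), A*]] ⊆ M₂(C). If B*·B ⊆ closure(B + B*) (computed entrywise in M₂(C)), then closure(A + A*) is closed under multiplication, i.e., (closure(A + A*))·(closure(A + A*)) ⊆ closure(A + A*). -/
open scoped Pointwise

/-- If `B = [[A, 0], [closure(A+A*), A*]] ⊆ M₂(C)` satisfies `B*·B ⊆ closure(B+B*)`,
then `closure(A+A*)` is closed under multiplication. -/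
theorem stmt_5 {C : Type*} [NonUnitalNormedRing C] [StarRing C] [CStarRing C]
    [NormedSpace ℂ C] [IsScalarTower ℂ C C] [SMulCommClass ℂ C C] [StarModule ℂ C]
    [CompleteSpace C]
    (A : NonUnitalSubalgebra ℂ C) (hA : IsClosed (A : Set C))
    (B : Set (Matrix (Fin 2) (Fin 2) C))
    (hB : B = {m : Matrix (Fin 2) (Fin 2) C | m 0 0 ∈ A ∧ m 0 1 = 0 ∧
      m 1 0 ∈ closure ((A : Set C) + star '' (A : Set C)) ∧ m 1 1 ∈ star '' (A : Set C)})
    (hsD : star '' B * B ⊆ closure (B + star '' B)) :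
    closure ((A : Set C) + star '' (A : Set C)) * closure ((A : Set C) + star '' (A : Set C)) ⊆
      closure ((A : Set C) + star '' (A : Set C)) := by
  set T : Set C := (A : Set C) + star '' (A : Set C) with hT
  set S : Set C := closure T with hS
  -- T is star-closed
  have hTstar : ∀ z ∈ T, star z ∈ T := by
    rintro z ⟨a, ha, b, ⟨a', ha', rfl⟩, rfl⟩
    exact ⟨a', ha', star a, ⟨a, ha, rfl⟩, by simp [add_comm]⟩
  -- S is star-closed
  have hSstar : ∀ z ∈ S, star z ∈ S := fun z hz =>
    map_mem_closure continuous_star hz hTstar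
  have h0A : (0 : C) ∈ A := A.zero_mem
  have h0A' : (0 : C) ∈ star '' (A : Set C) := ⟨0, h0A, star_zero C⟩
  have h0S : (0 : C) ∈ S := subset_closure ⟨0, h0A, 0, h0A', by simp⟩
  rintro w ⟨x, hx, y, hy, rfl⟩
  -- build the matrices
  set m : Matrix (Fin 2) (Fin 2) C := !![0, 0; star x, 0] with hm
  set n : Matrix (Fin 2) (Fin 2) C := !![0, 0; y, 0] with hn
  have hmB : m ∈ B := by
    rw [hB]
    refine ⟨by simpa [hm] using h0A, by simp [hm], ?_, ?_⟩
    · simpa [hm] using hSstar x hx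
    · simpa [hm] using h0A'
  have hnB : n ∈ B := by
    rw [hB]
    refine ⟨by simpa [hn] using h0A, by simp [hn], ?_, ?_⟩
    · simpa [hn] using hy
    · simpa [hn] using h0A'
  have hmem : star m * n ∈ closure (B + star '' B) :=
    hsD ⟨star m, ⟨m, hmB, rfl⟩, n, hnB, rfl⟩
  -- the (0,0) entry map
  have hcont : Continuous (fun p : Matrix (Fin 2) (Fin 2) C => p 0 0) :=
    (continuous_apply _).comp (continuous_apply _)
  have hsub : B + star '' B ⊆ (fun p : Matrix (Fin 2) (Fin 2) C => p 0 0) ⁻¹' S := by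
    rintro p ⟨b, hb, c', ⟨c, hc, rfl⟩, rfl⟩
    rw [hB] at hb hc
    refine subset_closure ⟨b 0 0, hb.1, star (c 0 0), ⟨c 0 0, hc.1, rfl⟩, ?_⟩
    simp [Matrix.add_apply, Matrix.star_apply]
  have hclosed : IsClosed ((fun p : Matrix (Fin 2) (Fin 2) C => p 0 0) ⁻¹' S) :=
    isClosed_closure.preimage hcont
  have hfinal : (star m * n) 0 0 ∈ S :=
    closure_minimal hsub hclosed hmem
  have hentry : (star m * n) 0 0 = x * y := by
    simp [Matrix.mul_apply, Fin.sum_univ_two, Matrix.star_apply, hm, hn]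
  rwa [hentry] at hfinal
end

section
/- Let T₂ ⊆ M₂(ℂ) be the algebra of upper triangular 2×2 complex matrices. Consider the map μ from T₂ into M₂(C([0,1])) defined by μ([[a,b],[0,c]]) = [[a·1, b·√x],[0, c·1]], where √x denotes the function t ↦ √t. Then μ is an isometric algebra homomorphism, but the image μ(T₂) fails the semi-Dirichlet property: the element [[0,0],[0,x]] = μ(E₁₂)*·μ(E₁₂) does not lie in μ(T₂) + μ(T₂)*. -/
/-!
On the diagonal `μ` is the identity and off it multiplies by `√t ∈ [0,1]`, so
`μ(m)(t) = √t • m + (1 - √t) • diag(m)` is a convex combination of `m` and its diagonal part.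
Diagonal entries are bounded by the operator norm, hence `‖μ(m)(t)‖ ≤ ‖m‖`, with equality at
`t = 1`. The `(2,2)` entry of `μ(E₁₂)* μ(E₁₂)` is the function `t`, whereas every element of
`μ(T₂) + μ(T₂)*` has constant diagonal entries.
-/

open scoped Matrix.Norms.L2Operator

/-- The map `μ : T₂ → M₂(C([0,1]))`, `μ([[a,b],[0,c]]) = [[a·1, b·√x],[0, c·1]]`,
realized as a continuous-matrix-valued map on `[0,1]` (diagonal entries constant,
off-diagonal entries multiplied by `√t`). -/
noncomputable def muT2 (m : Matrix (Fin 2) (Fin 2) ℂ) :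
    C(unitInterval, Matrix (Fin 2) (Fin 2) ℂ) where
  toFun t := Matrix.of fun i j =>
    if i = j then m i j else m i j * (Real.sqrt t : ℂ)
  continuous_toFun := by
    apply continuous_matrix
    intro i j
    by_cases h : i = j <;> simp only [h, Matrix.of_apply, if_true, if_false] <;> fun_prop

namespace Matrix

variable {𝕜 m n : Type*} [RCLike 𝕜] [Fintype m] [Fintype n] [DecidableEq n]

lemma l2_opNorm_entry_le (A : Matrix m n 𝕜) (i : m) (j : n) : ‖A i j‖ ≤ ‖A‖ := by
  have h := A.l2_opNorm_mulVec (EuclideanSpace.single j 1)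
  calc ‖A i j‖ = ‖(EuclideanSpace.equiv m 𝕜).symm (A *ᵥ EuclideanSpace.single j 1) i‖ := by
        simp [mulVec_single]
    _ ≤ _ := PiLp.norm_apply_le _ i
    _ ≤ ‖A‖ * ‖EuclideanSpace.single j (1 : 𝕜)‖ := h
    _ = ‖A‖ := by simp

lemma l2_opNorm_diagonal_diag_le (A : Matrix n n 𝕜) : ‖diagonal A.diag‖ ≤ ‖A‖ := by
  rw [l2_opNorm_diagonal]
  exact (pi_norm_le_iff_of_nonneg (norm_nonneg A)).mpr fun i => A.l2_opNorm_entry_le i i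

lemma l2_opNorm_convex_diagonal_diag_le (A : Matrix n n 𝕜) {s : ℝ} (hs₀ : 0 ≤ s) (hs₁ : s ≤ 1) :
    ‖(s : 𝕜) • A + ((1 - s : ℝ) : 𝕜) • diagonal A.diag‖ ≤ ‖A‖ := by
  calc _ ≤ s * ‖A‖ + (1 - s) * ‖diagonal A.diag‖ := by
        grw [norm_add_le, norm_smul, norm_smul, RCLike.norm_ofReal, RCLike.norm_ofReal,
          abs_of_nonneg hs₀, abs_of_nonneg (sub_nonneg.mpr hs₁)]
    _ ≤ s * ‖A‖ + (1 - s) * ‖A‖ := by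
        gcongr
        exact A.l2_opNorm_diagonal_diag_le
    _ = ‖A‖ := by ring

end Matrix

open Matrix

lemma muT2_apply (m : Matrix (Fin 2) (Fin 2) ℂ) (t : unitInterval) (i j : Fin 2) :
    muT2 m t i j = if i = j then m i j else m i j * (Real.sqrt t : ℂ) := rfl

lemma muT2_apply_eq_smul_add_diagonal (m : Matrix (Fin 2) (Fin 2) ℂ) (t : unitInterval) :
    muT2 m t = (Real.sqrt t : ℂ) • m + ((1 - Real.sqrt t : ℝ) : ℂ) • diagonal m.diag := by
  ext i j
  rw [muT2_apply]
  split_ifs with h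
  · subst h
    simp only [Matrix.add_apply, Matrix.smul_apply, diagonal_apply_eq, diag_apply, smul_eq_mul]
    push_cast
    ring
  · simp [h, mul_comm]

lemma norm_muT2_apply_le (m : Matrix (Fin 2) (Fin 2) ℂ) (t : unitInterval) :
    ‖muT2 m t‖ ≤ ‖m‖ := by
  rw [muT2_apply_eq_smul_add_diagonal]
  exact m.l2_opNorm_convex_diagonal_diag_le (Real.sqrt_nonneg t) (Real.sqrt_le_one.mpr t.2.2)

lemma muT2_apply_one (m : Matrix (Fin 2) (Fin 2) ℂ) : muT2 m 1 = m := by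
  simp [muT2_apply_eq_smul_add_diagonal]

lemma norm_muT2 (m : Matrix (Fin 2) (Fin 2) ℂ) : ‖muT2 m‖ = ‖m‖ :=
  le_antisymm ((ContinuousMap.norm_le _ (norm_nonneg m)).2 (norm_muT2_apply_le m))
    (by simpa only [muT2_apply_one] using (muT2 m).norm_coe_le_norm 1)

lemma muT2_mul_apply {m n : Matrix (Fin 2) (Fin 2) ℂ} (hm : m 1 0 = 0) (hn : n 1 0 = 0)
    (t : unitInterval) : muT2 (m * n) t = muT2 m t * muT2 n t := by
  ext i j
  fin_cases i <;> fin_cases j <;> simp [muT2_apply, mul_apply, Fin.sum_univ_two, hm, hn]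
  ring

lemma muT2_add_apply (m n : Matrix (Fin 2) (Fin 2) ℂ) (t : unitInterval) :
    muT2 (m + n) t = muT2 m t + muT2 n t := by
  ext i j
  simp only [Matrix.add_apply, muT2_apply]
  split_ifs <;> ring

lemma muT2_smul_apply (c : ℂ) (m : Matrix (Fin 2) (Fin 2) ℂ) (t : unitInterval) :
    muT2 (c • m) t = c • muT2 m t := by
  ext i j
  simp only [Matrix.smul_apply, muT2_apply, smul_eq_mul]
  split_ifs <;> ring

lemma muT2_apply_one_one (m : Matrix (Fin 2) (Fin 2) ℂ) (t : unitInterval) :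
    muT2 m t 1 1 = m 1 1 := rfl

lemma star_muT2_E12_mul_muT2_E12_apply_one_one (t : unitInterval) :
    (star (muT2 !![0, 1; 0, 0] t) * muT2 !![0, 1; 0, 0] t) 1 1 = (t : ℂ) := by
  simp [muT2_apply, mul_apply, Fin.sum_univ_two, star_eq_conjTranspose, ← Complex.ofReal_mul,
    Real.mul_self_sqrt t.2.1]

/-- `μ` is an isometric (on `T₂`) algebra homomorphism, but its image fails the
semi-Dirichlet property: `μ(E₁₂)*·μ(E₁₂) ∉ μ(T₂) + μ(T₂)*`. -/
theorem stmt_7 :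
    (∀ m : Matrix (Fin 2) (Fin 2) ℂ, m 1 0 = 0 → ‖muT2 m‖ = ‖m‖) ∧
    (∀ m n : Matrix (Fin 2) (Fin 2) ℂ, m 1 0 = 0 → n 1 0 = 0 →
      ∀ τ, muT2 (m * n) τ = muT2 m τ * muT2 n τ) ∧
    (∀ m n : Matrix (Fin 2) (Fin 2) ℂ, ∀ τ, muT2 (m + n) τ = muT2 m τ + muT2 n τ) ∧
    (∀ (c : ℂ) (m : Matrix (Fin 2) (Fin 2) ℂ) (τ), muT2 (c • m) τ = c • muT2 m τ) ∧
    ¬ ∃ s t : Matrix (Fin 2) (Fin 2) ℂ, s 1 0 = 0 ∧ t 1 0 = 0 ∧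
      ∀ τ, star (muT2 !![0,1;0,0] τ) * muT2 !![0,1;0,0] τ = muT2 s τ + star (muT2 t τ) := by
  refine ⟨fun m _ => norm_muT2 m, fun m n hm hn => muT2_mul_apply hm hn, muT2_add_apply,
    muT2_smul_apply, ?_⟩
  rintro ⟨s, t, -, -, h⟩
  have entry (τ : unitInterval) : (τ : ℂ) = s 1 1 + star (t 1 1) := by
    rw [← star_muT2_E12_mul_muT2_E12_apply_one_one, h τ, Matrix.add_apply, star_apply,
      muT2_apply_one_one, muT2_apply_one_one]
  simpa using (entry 1).trans (entry 0).symm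
end
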